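/- arXiv:1708.03388 — 2 statements merged into one kernel-verified Lean document; each statement's English description precedes it below -/
import Mathlib

section
/- Let α, β > 0 be real numbers with β > α. Then lim_{z → +∞} z^{β−α} e^{−z} · (Γ(α)/Γ(β)) · ₁F₁(α; β; z) = 1, where ₁F₁(α; β; z) = ∑_{m=0}^∞ ((α)_m/(β)_m) z^m/m! is the confluent hypergeometric function and (α)_m = α(α+1)⋯(α+m−1) is the Pochhammer symbol. -/
/-!
Euler's integral representation
`₁F₁(α; β; z) = Γ(β) / (Γ(α) Γ(β - α)) ∫₀¹ e^{zt} t^{α-1} (1-t)^{β-α-1} dt`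
follows by integrating the exponential series termwise against the Beta kernel. Reflecting
`t ↦ 1 - t` pulls out `e^z` and leaves the Laplace integral
`∫₀¹ e^{-zu} u^{β-α-1} (1-u)^{α-1} du`, which Watson's lemma evaluates as
`Γ(β - α) z^{α-β} (1 + o(1))`: substituting `s = zu` near `0` gives
`∫₀^∞ e^{-s} s^{β-α-1} ds = Γ(β - α)` by dominated convergence, and the integral over
`[1/2, 1]` is `O(e^{-z/2})`.
-/

open Filter

/-- Rising factorial (Pochhammer symbol) `(x)_m = x(x+1)⋯(x+m−1)`. -/
noncomputable def poch (x : ℝ) (m : ℕ) : ℝ := ∏ i ∈ Finset.range m, (x + i)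

/-- The confluent hypergeometric function `₁F₁(α;β;z)`. -/
noncomputable def oneFone (α β z : ℝ) : ℝ :=
  ∑' m : ℕ, (poch α m / poch β m) * z ^ m / (Nat.factorial m : ℝ)

open MeasureTheory Set Real
open scoped Interval Topology

lemma poch_pos {x : ℝ} (hx : 0 < x) (m : ℕ) : 0 < poch x m :=
  Finset.prod_pos fun _ _ => by positivity

lemma Gamma_add_nat_eq_mul_poch {x : ℝ} (hx : 0 < x) (m : ℕ) :
    Gamma (x + m) = Gamma x * poch x m := by
  induction m with
  | zero => simp [poch]
  | succ n ih =>
    rw [Nat.cast_succ, ← add_assoc, Gamma_add_one (by positivity), ih]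
    simp only [poch, Finset.prod_range_succ]
    ring

lemma ofReal_rpow_mul_one_sub_rpow {a b t : ℝ} (ht : t ∈ Icc (0 : ℝ) 1) :
    (t : ℂ) ^ ((a : ℂ) - 1) * (1 - (t : ℂ)) ^ ((b : ℂ) - 1)
      = ((t ^ (a - 1) * (1 - t) ^ (b - 1) : ℝ) : ℂ) := by
  have h1t : 0 ≤ 1 - t := sub_nonneg.2 ht.2
  rw [Complex.ofReal_mul, Complex.ofReal_cpow ht.1, Complex.ofReal_cpow h1t]
  push_cast
  rfl

lemma intervalIntegrable_rpow_mul_one_sub_rpow {a b : ℝ} (ha : 0 < a) (hb : 0 < b) :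
    IntervalIntegrable (fun t : ℝ => t ^ (a - 1) * (1 - t) ^ (b - 1)) volume 0 1 := by
  refine (Complex.betaIntegral_convergent (u := a) (v := b) (by simpa) (by simpa)).norm.congr ?_
  intro t ht
  rw [uIoc_of_le (zero_le_one' ℝ)] at ht
  have ht' : t ∈ Icc (0 : ℝ) 1 := Ioc_subset_Icc_self ht
  simp only [ofReal_rpow_mul_one_sub_rpow ht', Complex.norm_real, Real.norm_eq_abs]
  exact abs_of_nonneg (mul_nonneg (rpow_nonneg ht'.1 _) (rpow_nonneg (sub_nonneg.2 ht'.2) _))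

lemma integral_rpow_mul_one_sub_rpow {a b : ℝ} (ha : 0 < a) (hb : 0 < b) :
    ∫ t in (0 : ℝ)..1, t ^ (a - 1) * (1 - t) ^ (b - 1) = Gamma a * Gamma b / Gamma (a + b) := by
  have h := Complex.betaIntegral_eq_Gamma_mul_div a b (by simpa) (by simpa)
  rw [Complex.betaIntegral, intervalIntegral.integral_congr fun t ht =>
      ofReal_rpow_mul_one_sub_rpow (uIcc_of_le (zero_le_one' ℝ) ▸ ht),
    intervalIntegral.integral_ofReal, ← Complex.ofReal_add, Complex.Gamma_ofReal,
    Complex.Gamma_ofReal, Complex.Gamma_ofReal] at h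
  exact_mod_cast h

lemma integral_exp_mul_rpow_mul_one_sub_rpow (z a b : ℝ) :
    ∫ t in (0 : ℝ)..1, exp (z * t) * (t ^ (a - 1) * (1 - t) ^ (b - 1))
      = exp z * ∫ u in (0 : ℝ)..1, exp (-(z * u)) * (u ^ (b - 1) * (1 - u) ^ (a - 1)) := by
  have h := intervalIntegral.integral_comp_sub_left
    (fun t => exp (z * t) * (t ^ (a - 1) * (1 - t) ^ (b - 1))) (a := 0) (b := 1) 1
  simp only [sub_sub_cancel, sub_self, sub_zero] at h
  rw [← h, ← intervalIntegral.integral_const_mul]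
  refine intervalIntegral.integral_congr fun u _ => ?_
  rw [mul_one_sub, sub_eq_add_neg, exp_add]
  ring

lemma integral_pow_div_factorial_mul_rpow_mul_one_sub_rpow {α β : ℝ}
    (hα : 0 < α) (hαβ : α < β) (z : ℝ) (m : ℕ) :
    ∫ t in (0 : ℝ)..1, (z * t) ^ m / m.factorial * (t ^ (α - 1) * (1 - t) ^ (β - α - 1))
      = Gamma α * Gamma (β - α) / Gamma β * (poch α m / poch β m * z ^ m / m.factorial) := by
  have hβ : 0 < β := hα.trans hαβ
  have hsplit : ∀ t ∈ Ι (0 : ℝ) 1,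
      (z * t) ^ m / m.factorial * (t ^ (α - 1) * (1 - t) ^ (β - α - 1))
        = z ^ m / m.factorial * (t ^ (α + m - 1) * (1 - t) ^ (β - α - 1)) := by
    intro t ht
    rw [uIoc_of_le (zero_le_one' ℝ)] at ht
    rw [← sub_add_eq_add_sub, Real.rpow_add_natCast ht.1.ne']
    ring
  have hβm : α + m + (β - α) = β + m := by ring
  rw [intervalIntegral.integral_congr_ae (ae_of_all _ hsplit), intervalIntegral.integral_const_mul,
    integral_rpow_mul_one_sub_rpow (by positivity) (sub_pos.2 hαβ), hβm,
    Gamma_add_nat_eq_mul_poch hα, Gamma_add_nat_eq_mul_poch hβ]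
  have := (poch_pos hβ m).ne'
  have := (Gamma_pos_of_pos hβ).ne'
  field_simp

theorem oneFone_eq_integral {α β : ℝ} (hα : 0 < α) (hαβ : α < β) (z : ℝ) :
    oneFone α β z = Gamma β / (Gamma α * Gamma (β - α)) *
      ∫ t in (0 : ℝ)..1, exp (z * t) * (t ^ (α - 1) * (1 - t) ^ (β - α - 1)) := by
  set g : ℝ → ℝ := fun t => t ^ (α - 1) * (1 - t) ^ (β - α - 1)
  have hg : IntervalIntegrable g volume 0 1 :=
    intervalIntegrable_rpow_mul_one_sub_rpow hα (sub_pos.2 hαβ)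
  have hsum := intervalIntegral.hasSum_integral_of_dominated_convergence (μ := volume) (a := 0)
    (b := 1) (F := fun m t => (z * t) ^ m / m.factorial * g t) (f := fun t => exp (z * t) * g t)
    (fun m t => |z| ^ m / m.factorial * g t) ?meas ?bound ?summable ?integrable ?lim
  case meas =>
    exact fun m => (Continuous.aestronglyMeasurable (by fun_prop)).mul hg.def'.aestronglyMeasurable
  case bound =>
    refine fun m => ae_of_all _ fun t ht => ?_
    rw [uIoc_of_le (zero_le_one' ℝ)] at ht
    have hgt : 0 ≤ g t :=
      mul_nonneg (rpow_nonneg ht.1.le _) (rpow_nonneg (sub_nonneg.2 ht.2) _)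
    rw [norm_mul, norm_div, norm_pow, Real.norm_of_nonneg hgt, Real.norm_natCast, norm_mul,
      Real.norm_of_nonneg ht.1.le, Real.norm_eq_abs]
    gcongr
    exacts [mul_nonneg (abs_nonneg z) ht.1.le, mul_le_of_le_one_right (abs_nonneg z) ht.2]
  case summable =>
    exact ae_of_all _ fun t _ => (summable_pow_div_factorial |z|).mul_right (g t)
  case integrable =>
    simp_rw [tsum_mul_right, (NormedSpace.expSeries_div_hasSum_exp |z|).tsum_eq]
    exact hg.const_mul _
  case lim =>
    refine ae_of_all _ fun t _ => ?_
    rw [Real.exp_eq_exp_ℝ]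
    exact (NormedSpace.expSeries_div_hasSum_exp (z * t)).mul_right (g t)
  simp only [g, integral_pow_div_factorial_mul_rpow_mul_one_sub_rpow hα hαβ] at hsum
  have hK : 0 < Gamma α * Gamma (β - α) / Gamma β := by
    have := Gamma_pos_of_pos hα
    have := Gamma_pos_of_pos (sub_pos.2 hαβ)
    have := Gamma_pos_of_pos (hα.trans hαβ)
    positivity
  have hterms := hsum.mul_left (Gamma α * Gamma (β - α) / Gamma β)⁻¹
  simp only [inv_mul_cancel_left₀ hK.ne'] at hterms
  rw [oneFone, hterms.tsum_eq, inv_div]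

lemma tendsto_rpow_mul_integral_exp_neg_mul_of_pos {a b : ℝ} (ha : 0 < a) (hab : a ≤ b)
    {f : ℝ → ℝ} (hf : IntervalIntegrable f volume a b) (c : ℝ) :
    Tendsto (fun z => z ^ c * ∫ u in a..b, exp (-(z * u)) * f u) atTop (𝓝 0) := by
  have hdecay := (tendsto_rpow_mul_exp_neg_mul_atTop_nhds_zero c a ha).mul_const
    (∫ u in a..b, ‖f u‖)
  rw [zero_mul] at hdecay
  refine squeeze_zero_norm' ((eventually_ge_atTop 0).mono fun z hz => ?_) hdecay
  rw [norm_mul, Real.norm_of_nonneg (rpow_nonneg hz c), mul_assoc]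
  gcongr
  calc ‖∫ u in a..b, exp (-(z * u)) * f u‖ ≤ ∫ u in a..b, exp (-a * z) * ‖f u‖ := by
        refine intervalIntegral.norm_integral_le_of_norm_le hab (ae_of_all _ fun u hu => ?_)
          (hf.norm.const_mul _)
        rw [norm_mul, Real.norm_of_nonneg (exp_nonneg _)]
        gcongr
        nlinarith [hu.1]
    _ = exp (-a * z) * ∫ u in a..b, ‖f u‖ := intervalIntegral.integral_const_mul _ _

section Watson

variable {c : ℝ} {φ : ℝ → ℝ}

lemma rpow_mul_integral_exp_neg_mul_eq {a z : ℝ} (ha : 0 ≤ a) (hz : 0 < z) :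
    z ^ c * ∫ u in (0 : ℝ)..a, exp (-(z * u)) * (u ^ (c - 1) * φ u)
      = ∫ s in (0 : ℝ)..z * a, exp (-s) * s ^ (c - 1) * φ (s / z) := by
  have hscale : z ^ (c - 1) * ∫ u in (0 : ℝ)..a, exp (-(z * u)) * (u ^ (c - 1) * φ u)
      = ∫ u in (0 : ℝ)..a, exp (-(z * u)) * (z * u) ^ (c - 1) * φ (z * u / z) := by
    rw [← intervalIntegral.integral_const_mul]
    refine intervalIntegral.integral_congr fun u hu => ?_
    rw [uIcc_of_le ha] at hu
    rw [mul_rpow hz.le hu.1, mul_div_cancel_left₀ u hz.ne']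
    ring
  have hsubst := intervalIntegral.smul_integral_comp_mul_left (a := 0) (b := a)
    (fun s => exp (-s) * s ^ (c - 1) * φ (s / z)) z
  rw [mul_zero] at hsubst
  rw [← hsubst, smul_eq_mul, ← hscale,
    rpow_sub_one hz.ne', ← mul_assoc, mul_div_cancel₀ _ hz.ne']

lemma tendsto_integral_exp_neg_mul_rpow_comp_div (hc : 0 < c) {a : ℝ} (ha : 0 < a)
    (hφ : ContinuousOn φ (Icc 0 a)) :
    Tendsto (fun z => ∫ s in (0 : ℝ)..z * a, exp (-s) * s ^ (c - 1) * φ (s / z)) atTop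
      (𝓝 (Gamma c * φ 0)) := by
  obtain ⟨M, hM⟩ := isCompact_Icc.exists_bound_of_continuousOn hφ
  set F : ℝ → ℝ → ℝ := fun z =>
    indicator (Ioc 0 (z * a)) fun s => exp (-s) * s ^ (c - 1) * φ (s / z)
  have hdiv_mem : ∀ {z s : ℝ}, 0 < z → s ∈ Ioc 0 (z * a) → s / z ∈ Icc 0 a :=
    fun hz hs => ⟨div_nonneg hs.1.le hz.le, (div_le_iff₀' hz).2 hs.2⟩
  have hF : ∀ᶠ z in atTop,
      ∫ s, F z s = ∫ s in (0 : ℝ)..z * a, exp (-s) * s ^ (c - 1) * φ (s / z) :=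
    (eventually_ge_atTop 0).mono fun z hz => by
      rw [intervalIntegral.integral_of_le (mul_nonneg hz ha.le),
        integral_indicator measurableSet_Ioc]
  have hΓ :
      Gamma c * φ 0 = ∫ s, indicator (Ioi 0) (fun s => exp (-s) * s ^ (c - 1) * φ 0) s := by
    rw [integral_indicator measurableSet_Ioi, integral_mul_const, Gamma_eq_integral hc]
  rw [hΓ]
  refine (tendsto_integral_filter_of_dominated_convergence
    (indicator (Ioi 0) fun s => exp (-s) * s ^ (c - 1) * M)
    ?meas ?bound ?integrable ?lim).congr' hF
  case meas =>
    refine (eventually_gt_atTop 0).mono fun z hz => ?_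
    rw [aestronglyMeasurable_indicator_iff measurableSet_Ioc]
    refine ContinuousOn.aestronglyMeasurable ?_ measurableSet_Ioc
    refine (continuous_exp.comp continuous_neg).continuousOn.mul
      (continuousOn_id.rpow_const fun s hs => Or.inl hs.1.ne') |>.mul ?_
    exact hφ.comp (continuous_id.div_const z).continuousOn fun s hs => hdiv_mem hz hs
  case bound =>
    have hM0 : 0 ≤ M := (norm_nonneg _).trans (hM 0 (left_mem_Icc.2 ha.le))
    refine (eventually_gt_atTop 0).mono fun z hz => ae_of_all _ fun s => ?_
    dsimp only [F]
    by_cases hs : s ∈ Ioc 0 (z * a)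
    · have hpos : 0 ≤ exp (-s) * s ^ (c - 1) := mul_nonneg (exp_nonneg _) (rpow_nonneg hs.1.le _)
      rw [indicator_of_mem hs, indicator_of_mem (Ioc_subset_Ioi_self hs), norm_mul,
        Real.norm_of_nonneg hpos]
      exact mul_le_mul_of_nonneg_left (hM _ (hdiv_mem hz hs)) hpos
    · rw [indicator_of_notMem hs, norm_zero]
      exact indicator_nonneg (fun s hs => mul_nonneg (mul_nonneg (exp_nonneg _)
        (rpow_nonneg (le_of_lt hs) _)) hM0) s
  case integrable =>
    rw [integrable_indicator_iff measurableSet_Ioi]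
    exact (GammaIntegral_convergent hc).mul_const M
  case lim =>
    refine ae_of_all _ fun s => ?_
    rcases le_or_gt s 0 with hs | hs
    · have hFs : ∀ z, F z s = 0 := fun z => indicator_of_notMem (fun h => hs.not_gt h.1) _
      rw [indicator_of_notMem (show s ∉ Ioi 0 from not_lt.2 hs)]
      simp only [hFs, tendsto_const_nhds]
    have hlarge : ∀ᶠ z in atTop, s ∈ Ioc 0 (z * a) :=
      (eventually_ge_atTop (s / a)).mono fun z hz => ⟨hs, (div_le_iff₀ ha).1 hz⟩
    have hdiv : Tendsto (fun z => s / z) atTop (𝓝[Icc 0 a] 0) :=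
      tendsto_nhdsWithin_iff.2 ⟨tendsto_const_nhds.div_atTop tendsto_id,
        (hlarge.and (eventually_gt_atTop 0)).mono fun z hz => hdiv_mem hz.2 hz.1⟩
    rw [indicator_of_mem (mem_Ioi.2 hs)]
    refine (tendsto_const_nhds.mul ((hφ 0 (left_mem_Icc.2 ha.le)).tendsto.comp hdiv)).congr' ?_
    exact hlarge.mono fun z hz =>
      (indicator_of_mem hz fun s => exp (-s) * s ^ (c - 1) * φ (s / z)).symm

theorem tendsto_rpow_mul_integral_exp_neg_mul (hc : 0 < c) {a b : ℝ} (ha : 0 < a) (hab : a ≤ b)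
    (hφ : ContinuousOn φ (Icc 0 a))
    (hint : IntervalIntegrable (fun u => u ^ (c - 1) * φ u) volume 0 b) :
    Tendsto (fun z => z ^ c * ∫ u in (0 : ℝ)..b, exp (-(z * u)) * (u ^ (c - 1) * φ u)) atTop
      (𝓝 (Gamma c * φ 0)) := by
  have hint_exp (z : ℝ) :
      IntervalIntegrable (fun u => exp (-(z * u)) * (u ^ (c - 1) * φ u)) volume 0 b :=
    hint.continuousOn_mul (by fun_prop : Continuous fun u => exp (-(z * u))).continuousOn
  have ha_mem : a ∈ [[0, b]] := uIcc_of_le (ha.le.trans hab) ▸ ⟨ha.le, hab⟩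
  have hhead := (tendsto_integral_exp_neg_mul_rpow_comp_div hc ha hφ).congr'
    ((eventually_gt_atTop 0).mono fun z hz => (rpow_mul_integral_exp_neg_mul_eq ha.le hz).symm)
  have htail := tendsto_rpow_mul_integral_exp_neg_mul_of_pos ha hab
    (hint.mono_set (uIcc_subset_uIcc_right ha_mem)) c
  rw [← add_zero (Gamma c * φ 0)]
  refine (hhead.add htail).congr fun z => ?_
  rw [← mul_add, intervalIntegral.integral_add_adjacent_intervals
    ((hint_exp z).mono_set (uIcc_subset_uIcc_left ha_mem))
    ((hint_exp z).mono_set (uIcc_subset_uIcc_right ha_mem))]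

end Watson

theorem oneFone_asymptotic_general (α β : ℝ) (hα : 0 < α) (hab : α < β) :
    Tendsto (fun z : ℝ =>
        z ^ (β - α) * Real.exp (-z) * (Real.Gamma α / Real.Gamma β) * oneFone α β z)
      atTop (nhds 1) := by
  have hc : 0 < β - α := sub_pos.2 hab
  have hφ : ContinuousOn (fun u : ℝ => (1 - u) ^ (α - 1)) (Icc 0 (1 / 2)) :=
    (continuousOn_const.sub continuousOn_id).rpow_const fun u hu =>
      Or.inl (sub_pos.2 (hu.2.trans_lt (by norm_num))).ne'
  have hwatson := (tendsto_rpow_mul_integral_exp_neg_mul hc (by norm_num) (by norm_num) hφ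
    (intervalIntegrable_rpow_mul_one_sub_rpow hc hα)).const_mul (Gamma (β - α))⁻¹
  rw [sub_zero, one_rpow, mul_one, inv_mul_cancel₀ (Gamma_pos_of_pos hc).ne'] at hwatson
  refine hwatson.congr fun z => ?_
  have := (Gamma_pos_of_pos hα).ne'
  have := (Gamma_pos_of_pos (hα.trans hab)).ne'
  rw [oneFone_eq_integral hα hab, integral_exp_mul_rpow_mul_one_sub_rpow, exp_neg]
  field_simp

/-- Leading asymptotics of `₁F₁`:
`z^{β−α} e^{−z} (Γ(α)/Γ(β)) ₁F₁(α;β;z) → 1` as `z → +∞`. -/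
theorem oneFone_asymptotic (α β : ℝ) (hα : 0 < α) (hβ : 0 < β) (hab : α < β) :
    Tendsto (fun z : ℝ =>
        z ^ (β - α) * Real.exp (-z) * (Real.Gamma α / Real.Gamma β) * oneFone α β z)
      atTop (nhds 1) :=
  oneFone_asymptotic_general α β hα hab
end

section
/- Let n ≥ 2, write elements of ℂ^{n+1} as z = (z_0, z_1, v) with v ∈ ℂ^{n−1}, and for u ∈ ℂ, v ∈ ℂ^{n−1} set z(u,v) := (u(1 − v·v)/2, i u(1 + v·v)/2, u v), where v·v = ∑_k v_k². Then z(u,v)·z(u,v) = 0 for all (u,v), and the pullback of the n-form (dz_1 ∧ dz_2 ∧ … ∧ dz_n)/z_0 under the map (u,v) ↦ z(u,v) equals i · u^{n−2} du ∧ dv_1 ∧ … ∧ dv_{n−1} (on the set where u ≠ 0 and v·v ≠ 1). -/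
/-- The holomorphic chart `(u,v) ↦ z(u,v) = (u(1−v·v)/2, iu(1+v·v)/2, uv)`
of the rank-one Kepler manifold of the spin factor, with `n = m + 2`. -/
noncomputable def keplerChart (m : ℕ) (p : ℂ × (Fin (m + 1) → ℂ)) : Fin (m + 3) → ℂ :=
  Fin.cons (p.1 * (1 - ∑ k, p.2 k ^ 2) / 2)
    (Fin.cons (Complex.I * p.1 * (1 + ∑ k, p.2 k ^ 2) / 2)
      (fun k => p.1 * p.2 k))

/-- Coordinate directions `(u, v_1, …, v_{n−1})` in the chart domain. -/
noncomputable def chartDir (m : ℕ) : Fin (m + 2) → ℂ × (Fin (m + 1) → ℂ) :=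
  Fin.cons (1, 0) (fun k => (0, Pi.single k 1))

/-!
Writing `s = v·v`, the null-cone identity is `(u(1 - s)/2)² - (u(1 + s)/2)² + u²s = 0`.
The Jacobian of `(u, v) ↦ (z₁, …, zₙ)` is the bordered matrix `[[i(1 + s)/2, i u vᵀ], [v, u I]]`,
which factors as `[[i(1 + s)/2, i vᵀ], [v, I]] · diag(1, u I)`; the Schur complement of the
identity block then gives the determinant `u^(n-1) (i(1 + s)/2 - i s) = i u^(n-2) z₀`.
-/

namespace Matrix

theorem det_fromBlocks_smul_one₂₂ {R l n : Type*} [CommRing R] [Fintype l] [DecidableEq l]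
    [Fintype n] [DecidableEq n] (A : Matrix l l R) (B : Matrix l n R) (C : Matrix n l R) (t : R) :
    (fromBlocks A (t • B) C (t • 1)).det = t ^ Fintype.card n * (A - B * C).det := by
  have hfactor :
      fromBlocks A (t • B) C (t • 1) = fromBlocks A B C 1 * fromBlocks 1 0 0 (t • 1) := by
    simp [fromBlocks_multiply]
  rw [hfactor, det_mul, det_fromBlocks_one₂₂, det_fromBlocks_zero₂₁, det_one, det_smul, det_one,
    one_mul, mul_one, mul_comm]

end Matrix

def finSuccEquivSum (n : ℕ) : Fin (n + 1) ≃ Fin 1 ⊕ Fin n where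
  toFun := Fin.cases (Sum.inl 0) Sum.inr
  invFun := Sum.elim (fun _ => 0) Fin.succ
  left_inv i := by induction i using Fin.cases <;> simp
  right_inv x := by
    rcases x with x | x
    · simp [Subsingleton.elim x 0]
    · simp

theorem hasFDerivAt_sum_sq {𝕜 ι : Type*} [NontriviallyNormedField 𝕜] [Fintype ι] (v : ι → 𝕜) :
    HasFDerivAt (fun w : ι → 𝕜 => ∑ k, w k ^ 2)
      (∑ k, (2 * v k) • ContinuousLinearMap.proj (R := 𝕜) (φ := fun _ : ι => 𝕜) k) v := by
  refine HasFDerivAt.fun_sum fun k _ => ?_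
  simpa using (hasFDerivAt_apply (𝕜 := 𝕜) k v).pow 2

section KeplerChart

variable (m : ℕ)

theorem keplerChart_dot_self (p : ℂ × (Fin (m + 1) → ℂ)) :
    ∑ k, keplerChart m p k * keplerChart m p k = 0 := by
  have hsum : ∑ k, (p.1 * p.2 k) * (p.1 * p.2 k) = p.1 ^ 2 * ∑ k, p.2 k ^ 2 := by
    rw [Finset.mul_sum]; exact Finset.sum_congr rfl fun k _ => by ring
  simp only [Fin.sum_univ_succ (n := m + 2), Fin.sum_univ_succ (n := m + 1), keplerChart,
    Fin.cons_zero, Fin.cons_succ, hsum]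
  linear_combination (p.1 ^ 2 * (1 + ∑ k, p.2 k ^ 2) ^ 2 / 4) * Complex.I_sq

theorem fderiv_keplerChart_one_apply (p d : ℂ × (Fin (m + 1) → ℂ)) :
    fderiv ℂ (fun q => keplerChart m q 1) p d =
      Complex.I * d.1 * (1 + ∑ k, p.2 k ^ 2) / 2 + Complex.I * p.1 * ∑ k, p.2 k * d.2 k := by
  have hs : HasFDerivAt (fun q : ℂ × (Fin (m + 1) → ℂ) => ∑ k, q.2 k ^ 2) _ p :=
    (hasFDerivAt_sum_sq p.2).comp p hasFDerivAt_snd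
  have h := ((hasFDerivAt_fst.const_mul Complex.I).fun_mul (hs.const_add 1)).mul_const (2⁻¹ : ℂ)
  have hz : (fun q => keplerChart m q 1) =
      fun q : ℂ × (Fin (m + 1) → ℂ) => Complex.I * q.1 * (1 + ∑ k, q.2 k ^ 2) * 2⁻¹ := by
    funext q; simp [keplerChart, div_eq_mul_inv]
  rw [hz, h.fderiv]
  simp only [smul_apply, add_apply, sum_apply, ContinuousLinearMap.comp_apply,
    ContinuousLinearMap.proj_apply, ContinuousLinearMap.coe_fst', ContinuousLinearMap.coe_snd',
    smul_eq_mul, mul_assoc, ← Finset.mul_sum]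
  ring

theorem fderiv_keplerChart_succ_succ_apply (k : Fin (m + 1)) (p d : ℂ × (Fin (m + 1) → ℂ)) :
    fderiv ℂ (fun q => keplerChart m q k.succ.succ) p d = d.1 * p.2 k + p.1 * d.2 k := by
  have hk : HasFDerivAt (fun q : ℂ × (Fin (m + 1) → ℂ) => q.2 k) _ p :=
    (hasFDerivAt_apply (𝕜 := ℂ) k p.2).comp p hasFDerivAt_snd
  rw [show (fun q => keplerChart m q k.succ.succ) = fun q => q.1 * q.2 k from rfl,
    (hasFDerivAt_fst.fun_mul hk).fderiv]
  simp only [add_apply, smul_apply, ContinuousLinearMap.comp_apply, ContinuousLinearMap.proj_apply,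
    ContinuousLinearMap.coe_fst', ContinuousLinearMap.coe_snd', smul_eq_mul]
  ring

theorem keplerChart_jacobian_eq_submatrix_fromBlocks (u : ℂ) (v : Fin (m + 1) → ℂ) :
    Matrix.of (fun i j : Fin (m + 2) =>
        fderiv ℂ (fun p => keplerChart m p i.succ) (u, v) (chartDir m j)) =
      (Matrix.fromBlocks (Matrix.of fun _ _ => Complex.I * (1 + ∑ k, v k ^ 2) / 2)
        (u • Matrix.of fun _ j => Complex.I * v j) (Matrix.of fun i _ => v i) (u • 1)).submatrix
        (finSuccEquivSum (m + 1)) (finSuccEquivSum (m + 1)) := by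
  ext i j
  induction i using Fin.cases <;> induction j using Fin.cases
  all_goals simp [finSuccEquivSum, chartDir, fderiv_keplerChart_one_apply,
    fderiv_keplerChart_succ_succ_apply, Pi.single_apply, Matrix.one_apply]
  ring

end KeplerChart

/-- With `n = m + 2`: the chart lands in the null cone `z·z = 0`, and the pullback of
the invariant `n`-form `(dz_1 ∧ … ∧ dz_n)/z_0` under `(u,v) ↦ z(u,v)` equals
`i·u^{n−2} du ∧ dv_1 ∧ … ∧ dv_{n−1}` (where `u ≠ 0` and `v·v ≠ 1`); i.e. the Jacobian
determinant of `(u,v) ↦ (z_1,…,z_n)` equals `i·u^{n−2}·z_0(u,v)`. -/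
theorem keplerChart_null_and_form_pullback (m : ℕ) (u : ℂ) (v : Fin (m + 1) → ℂ) :
    (∑ k, keplerChart m (u, v) k * keplerChart m (u, v) k) = 0 ∧
      (u ≠ 0 → (∑ k, v k ^ 2) ≠ 1 →
        Matrix.det (Matrix.of fun i j : Fin (m + 2) =>
            fderiv ℂ (fun p => keplerChart m p i.succ) (u, v) (chartDir m j)) =
          Complex.I * u ^ m * keplerChart m (u, v) 0) := by
  refine ⟨keplerChart_dot_self m (u, v), fun _ _ => ?_⟩
  have hdot : ∑ j, Complex.I * v j * v j = Complex.I * ∑ k, v k ^ 2 := by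
    rw [Finset.mul_sum]; exact Finset.sum_congr rfl fun j _ => by ring
  rw [keplerChart_jacobian_eq_submatrix_fromBlocks, Matrix.det_submatrix_equiv_self,
    Matrix.det_fromBlocks_smul_one₂₂, Matrix.det_fin_one]
  simp [Matrix.mul_apply, hdot, keplerChart]
  ring
end
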